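/- Let X₁ be an n×L₁ indicator matrix and X₂ an n×L₂ indicator matrix with L₁, L₂ ≥ 2, X₁:₂ = X₁ * X₂, Y ∈ ℝⁿ, and λ ≥ 0. Consider the constrained overlapped group-lasso objective O(μ, α₁, α₂, α̃₁, α̃₂, α₁:₂) = (1/2)‖Y − μ·1 − X₁α₁ − X₂α₂ − X₁α̃₁ − X₂α̃₂ − X₁:₂α₁:₂‖₂² + λ(‖α₁‖₂ + ‖α₂‖₂ + √(L₂‖α̃₁‖₂² + L₁‖α̃₂‖₂² + ‖α₁:₂‖₂²)). Then for any point with α₁:₂ = 0 that satisfies the zero-sum constraints ∑ᵢ α₁ⁱ = ∑ⱼ α₂ʲ = ∑ᵢ α̃₁ⁱ = ∑ⱼ α̃₂ʲ = 0, the point (μ, α₁ + α̃₁, α₂ + α̃₂, 0, 0, 0) also satisfies the constraints and has objective value O(μ, α₁ + α̃₁, α₂ + α̃₂, 0, 0, 0) ≤ O(μ, α₁, α₂, α̃₁, α̃₂, 0). Consequently, if the constrained problem with α₁:₂ forced to 0 attains its minimum, it attains it at a point with α̃₁ = α̃₂ = 0. -/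
import Mathlib


open scoped BigOperators

noncomputable section

/-- Euclidean norm of a finitely indexed vector. -/
def norm2 {m : Type*} [Fintype m] (v : m → ℝ) : ℝ := Real.sqrt (∑ i, v i ^ 2)

/-- The interaction matrix `X₁:₂ = X₁ * X₂`: its column indexed by `(i,j)` is the
entrywise product of column `i` of `X₁` with column `j` of `X₂`. -/
def interact {n L₁ L₂ : ℕ} (X₁ : Matrix (Fin n) (Fin L₁) ℝ)
    (X₂ : Matrix (Fin n) (Fin L₂) ℝ) : Matrix (Fin n) (Fin L₁ × Fin L₂) ℝ :=
  fun k q => X₁ k q.1 * X₂ k q.2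

/-- The constrained overlapped group-lasso objective `O(μ, α₁, α₂, α̃₁, α̃₂, α₁:₂)`. -/
def objO {n L₁ L₂ : ℕ} (X₁ : Matrix (Fin n) (Fin L₁) ℝ)
    (X₂ : Matrix (Fin n) (Fin L₂) ℝ) (Y : Fin n → ℝ) (lam : ℝ)
    (μ : ℝ) (α₁ : Fin L₁ → ℝ) (α₂ : Fin L₂ → ℝ) (a1 : Fin L₁ → ℝ) (a2 : Fin L₂ → ℝ)
    (a12 : Fin L₁ × Fin L₂ → ℝ) : ℝ :=
  (1 / 2) * (∑ k, (Y k - μ - X₁.mulVec α₁ k - X₂.mulVec α₂ k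
      - X₁.mulVec a1 k - X₂.mulVec a2 k - (interact X₁ X₂).mulVec a12 k) ^ 2)
    + lam * (norm2 α₁ + norm2 α₂
      + Real.sqrt ((L₂ : ℝ) * ∑ i, a1 i ^ 2 + (L₁ : ℝ) * ∑ j, a2 j ^ 2 + ∑ r, a12 r ^ 2))

lemma norm2_nonneg {m : Type*} [Fintype m] (v : m → ℝ) : 0 ≤ norm2 v :=
  Real.sqrt_nonneg _

lemma norm2_add_le {m : Type*} [Fintype m] (v w : m → ℝ) :
    norm2 (fun i => v i + w i) ≤ norm2 v + norm2 w := by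
  have key : ∀ u : m → ℝ, norm2 u = ‖(WithLp.equiv 2 (m → ℝ)).symm u‖ := by
    intro u
    simp [norm2, EuclideanSpace.norm_eq, Real.norm_eq_abs, sq_abs]
  rw [key, key, key]
  have : (WithLp.equiv 2 (m → ℝ)).symm (fun i => v i + w i)
      = (WithLp.equiv 2 (m → ℝ)).symm v + (WithLp.equiv 2 (m → ℝ)).symm w := rfl
  rw [this]
  exact norm_add_le _ _

lemma sqrt_add_sqrt_le (A B c d : ℝ) (hA : 0 ≤ A) (hB : 0 ≤ B)
    (hc : 2 ≤ c) (hd : 2 ≤ d) :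
    Real.sqrt A + Real.sqrt B ≤ Real.sqrt (c * A + d * B) := by
  have h1 : Real.sqrt A ^ 2 = A := Real.sq_sqrt hA
  have h2 : Real.sqrt B ^ 2 = B := Real.sq_sqrt hB
  have h3 : 0 ≤ Real.sqrt A := Real.sqrt_nonneg _
  have h4 : 0 ≤ Real.sqrt B := Real.sqrt_nonneg _
  have h5 : (Real.sqrt A + Real.sqrt B) ^ 2 ≤ c * A + d * B := by
    nlinarith [sq_nonneg (Real.sqrt A - Real.sqrt B)]
  calc Real.sqrt A + Real.sqrt B
      = Real.sqrt ((Real.sqrt A + Real.sqrt B) ^ 2) := by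
        rw [Real.sqrt_sq (by positivity)]
    _ ≤ Real.sqrt (c * A + d * B) := Real.sqrt_le_sqrt h5

/-- When the interaction part is zero, moving `α̃₁, α̃₂` into the
main-effect slots preserves the constraints and does not increase the objective; hence,
if the constrained problem with `α₁:₂` forced to `0` attains its minimum, it attains it
at a point with `α̃₁ = α̃₂ = 0`. -/
theorem stmt_16 (n L₁ L₂ : ℕ) (hL₁ : 2 ≤ L₁) (hL₂ : 2 ≤ L₂)
    (X₁ : Matrix (Fin n) (Fin L₁) ℝ)
    (hX₁ : ∀ k : Fin n, ∃ i : Fin L₁, ∀ j : Fin L₁, X₁ k j = if j = i then (1 : ℝ) else 0)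
    (X₂ : Matrix (Fin n) (Fin L₂) ℝ)
    (hX₂ : ∀ k : Fin n, ∃ i : Fin L₂, ∀ j : Fin L₂, X₂ k j = if j = i then (1 : ℝ) else 0)
    (Y : Fin n → ℝ) (lam : ℝ) (hlam : 0 ≤ lam) :
    (∀ (μ : ℝ) (α₁ a1 : Fin L₁ → ℝ) (α₂ a2 : Fin L₂ → ℝ),
      (∑ i, α₁ i = 0) → (∑ j, α₂ j = 0) → (∑ i, a1 i = 0) → (∑ j, a2 j = 0) →
        ((∑ i, (α₁ i + a1 i) = 0) ∧ (∑ j, (α₂ j + a2 j) = 0) ∧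
          objO X₁ X₂ Y lam μ (fun i => α₁ i + a1 i) (fun j => α₂ j + a2 j) 0 0 0
            ≤ objO X₁ X₂ Y lam μ α₁ α₂ a1 a2 0)) ∧
    ((∃ (μ : ℝ) (α₁ a1 : Fin L₁ → ℝ) (α₂ a2 : Fin L₂ → ℝ),
        ((∑ i, α₁ i = 0) ∧ (∑ j, α₂ j = 0) ∧ (∑ i, a1 i = 0) ∧ (∑ j, a2 j = 0)) ∧
        (∀ (μ' : ℝ) (α₁' a1' : Fin L₁ → ℝ) (α₂' a2' : Fin L₂ → ℝ),
          (∑ i, α₁' i = 0) → (∑ j, α₂' j = 0) → (∑ i, a1' i = 0) → (∑ j, a2' j = 0) →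
            objO X₁ X₂ Y lam μ α₁ α₂ a1 a2 0 ≤ objO X₁ X₂ Y lam μ' α₁' α₂' a1' a2' 0)) →
      (∃ (μ : ℝ) (α₁ : Fin L₁ → ℝ) (α₂ : Fin L₂ → ℝ),
        ((∑ i, α₁ i = 0) ∧ (∑ j, α₂ j = 0)) ∧
        (∀ (μ' : ℝ) (α₁' a1' : Fin L₁ → ℝ) (α₂' a2' : Fin L₂ → ℝ),
          (∑ i, α₁' i = 0) → (∑ j, α₂' j = 0) → (∑ i, a1' i = 0) → (∑ j, a2' j = 0) →
            objO X₁ X₂ Y lam μ α₁ α₂ 0 0 0 ≤ objO X₁ X₂ Y lam μ' α₁' α₂' a1' a2' 0))) := by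
  have main : ∀ (μ : ℝ) (α₁ a1 : Fin L₁ → ℝ) (α₂ a2 : Fin L₂ → ℝ),
      (∑ i, α₁ i = 0) → (∑ j, α₂ j = 0) → (∑ i, a1 i = 0) → (∑ j, a2 j = 0) →
        ((∑ i, (α₁ i + a1 i) = 0) ∧ (∑ j, (α₂ j + a2 j) = 0) ∧
          objO X₁ X₂ Y lam μ (fun i => α₁ i + a1 i) (fun j => α₂ j + a2 j) 0 0 0
            ≤ objO X₁ X₂ Y lam μ α₁ α₂ a1 a2 0) := by
    intro μ α₁ a1 α₂ a2 h1 h2 h3 h4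
    refine ⟨by rw [Finset.sum_add_distrib, h1, h3, add_zero],
            by rw [Finset.sum_add_distrib, h2, h4, add_zero], ?_⟩
    unfold objO
    have hquad : ∀ k : Fin n,
        (Y k - μ - X₁.mulVec (fun i => α₁ i + a1 i) k - X₂.mulVec (fun j => α₂ j + a2 j) k
          - X₁.mulVec 0 k - X₂.mulVec 0 k - (interact X₁ X₂).mulVec 0 k)
        = (Y k - μ - X₁.mulVec α₁ k - X₂.mulVec α₂ k
          - X₁.mulVec a1 k - X₂.mulVec a2 k - (interact X₁ X₂).mulVec 0 k) := by
      intro k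
      have e1 : X₁.mulVec (fun i => α₁ i + a1 i) k = X₁.mulVec α₁ k + X₁.mulVec a1 k := by
        simp [Matrix.mulVec, dotProduct, mul_add, Finset.sum_add_distrib]
      have e2 : X₂.mulVec (fun j => α₂ j + a2 j) k = X₂.mulVec α₂ k + X₂.mulVec a2 k := by
        simp [Matrix.mulVec, dotProduct, mul_add, Finset.sum_add_distrib]
      have e3 : X₁.mulVec (0 : Fin L₁ → ℝ) k = 0 := by simp [Matrix.mulVec_zero]
      have e4 : X₂.mulVec (0 : Fin L₂ → ℝ) k = 0 := by simp [Matrix.mulVec_zero]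
      rw [e1, e2, e3, e4]; ring
    have hq : (∑ k, (Y k - μ - X₁.mulVec (fun i => α₁ i + a1 i) k
          - X₂.mulVec (fun j => α₂ j + a2 j) k
          - X₁.mulVec 0 k - X₂.mulVec 0 k - (interact X₁ X₂).mulVec 0 k) ^ 2)
        = ∑ k, (Y k - μ - X₁.mulVec α₁ k - X₂.mulVec α₂ k
          - X₁.mulVec a1 k - X₂.mulVec a2 k - (interact X₁ X₂).mulVec 0 k) ^ 2 := by
      exact Finset.sum_congr rfl fun k _ => by rw [hquad k]
    rw [hq]
    have hpen : norm2 (fun i => α₁ i + a1 i) + norm2 (fun j => α₂ j + a2 j)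
        + Real.sqrt ((L₂ : ℝ) * ∑ i, (0 : Fin L₁ → ℝ) i ^ 2
            + (L₁ : ℝ) * ∑ j, (0 : Fin L₂ → ℝ) j ^ 2 + ∑ r : Fin L₁ × Fin L₂, (0 : ℝ) ^ 2)
        ≤ norm2 α₁ + norm2 α₂
        + Real.sqrt ((L₂ : ℝ) * ∑ i, a1 i ^ 2 + (L₁ : ℝ) * ∑ j, a2 j ^ 2
            + ∑ r : Fin L₁ × Fin L₂, (0 : ℝ) ^ 2) := by
      have hz : Real.sqrt ((L₂ : ℝ) * ∑ i, (0 : Fin L₁ → ℝ) i ^ 2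
            + (L₁ : ℝ) * ∑ j, (0 : Fin L₂ → ℝ) j ^ 2 + ∑ r : Fin L₁ × Fin L₂, (0 : ℝ) ^ 2)
          = 0 := by simp
      rw [hz, add_zero]
      have t1 := norm2_add_le α₁ a1
      have t2 := norm2_add_le α₂ a2
      have hA : (0 : ℝ) ≤ ∑ i, a1 i ^ 2 := Finset.sum_nonneg fun i _ => sq_nonneg _
      have hB : (0 : ℝ) ≤ ∑ j, a2 j ^ 2 := Finset.sum_nonneg fun j _ => sq_nonneg _
      have t3 : norm2 a1 + norm2 a2
          ≤ Real.sqrt ((L₂ : ℝ) * ∑ i, a1 i ^ 2 + (L₁ : ℝ) * ∑ j, a2 j ^ 2) := by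
        have := sqrt_add_sqrt_le (∑ i, a1 i ^ 2) (∑ j, a2 j ^ 2) (L₂ : ℝ) (L₁ : ℝ)
          hA hB (by exact_mod_cast hL₂) (by exact_mod_cast hL₁)
        simpa [norm2] using this
      have hz2 : ((L₂ : ℝ) * ∑ i, a1 i ^ 2 + (L₁ : ℝ) * ∑ j, a2 j ^ 2
          + ∑ r : Fin L₁ × Fin L₂, (0 : ℝ) ^ 2)
          = (L₂ : ℝ) * ∑ i, a1 i ^ 2 + (L₁ : ℝ) * ∑ j, a2 j ^ 2 := by simp
      rw [hz2]
      linarith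
    simp only [Pi.zero_apply, ne_eq, OfNat.ofNat_ne_zero, not_false_eq_true, zero_pow,
      Finset.sum_const_zero, mul_zero, add_zero, zero_add, Real.sqrt_zero] at hpen ⊢
    have := mul_le_mul_of_nonneg_left hpen hlam
    linarith
  refine ⟨main, ?_⟩
  rintro ⟨μ, α₁, a1, α₂, a2, ⟨h1, h2, h3, h4⟩, hmin⟩
  obtain ⟨hc1, hc2, hle⟩ := main μ α₁ a1 α₂ a2 h1 h2 h3 h4
  refine ⟨μ, fun i => α₁ i + a1 i, fun j => α₂ j + a2 j, ⟨hc1, hc2⟩, ?_⟩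
  intro μ' α₁' a1' α₂' a2' g1 g2 g3 g4
  exact le_trans hle (hmin μ' α₁' a1' α₂' a2' g1 g2 g3 g4)

end
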